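/- Define NMTH-delete Nim positions with an odd number n ≥ 3 of heaps as vectors of n positive integers; a move chooses k ≤ n/2 (so k ≤ (n−1)/2), deletes k heaps, and splits k of the remaining heaps each into two positive parts. With P-positions defined inductively, a position ⟨z₁,…,z_n⟩ is a P-position if and only if v₂(z₁) = v₂(z₂) = ⋯ = v₂(z_n). -/

import Mathlib

inductive NPos {α : Type*} (Move : α → α → Prop) : α → Prop
  | intro {p q : α} : Move p q → (∀ r, Move q r → NPos Move r) → NPos Move p

def PPos {α : Type*} (Move : α → α → Prop) (p : α) : Prop :=
  ∀ q, Move p q → NPos Move q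

/-- A move of NMTH-delete Nim with `n` heaps: choose `k` with `1 ≤ k` and
`k ≤ n / 2` (i.e. `2 * k ≤ n`), delete `k` heaps (`d`), and split `k` of the
remaining heaps (recorded in `L` as pairs of positive parts), leaving the
rest (`u`) untouched. -/
def NMTHMove (n : ℕ) (p q : Multiset ℕ) : Prop :=
  ∃ (k : ℕ) (d u : Multiset ℕ) (L : Multiset (ℕ × ℕ)),
    1 ≤ k ∧ 2 * k ≤ n ∧
    Multiset.card d = k ∧ Multiset.card L = k ∧
    (∀ e ∈ L, 0 < e.1 ∧ 0 < e.2) ∧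
    p = d + u + L.map (fun e => e.1 + e.2) ∧
    q = u + L.map Prod.fst + L.map Prod.snd


/-! Let `E` be the set of positions all of whose heaps have the same 2-adic valuation.
No move leads from `E` into `E`: as `n` is odd, `2k < n`, so some heap `x` is left untouched,
and a heap split into `a + b` with `v₂ a = v₂ b = v₂ x` would have `v₂ (a + b) > v₂ x`.
From outside `E` there is a move into `E`: if `v` is the least valuation, split half (rounded up)
of the heaps `z` of larger valuation as `2 ^ v + (z - 2 ^ v)`, delete the others, and if their
number is odd delete one heap of valuation `v` as well. So `E` is a kernel of the game graph,
and the sum of the heaps decreases along moves. -/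

section Kernel

variable {α : Type*} {Move : α → α → Prop}

theorem nPos_iff {p : α} : NPos Move p ↔ ∃ q, Move p q ∧ PPos Move q :=
  ⟨fun ⟨hpq, hq⟩ => ⟨_, hpq, hq⟩, fun ⟨_, hpq, hq⟩ => .intro hpq hq⟩

theorem pPos_iff_of_kernel (Legal S : α → Prop) (f : α → ℕ)
    (legal_of_move : ∀ p q, Legal p → Move p q → Legal q)
    (lt_of_move : ∀ p q, Legal p → Move p q → f q < f p)
    (not_mem_of_move : ∀ p q, Legal p → S p → Move p q → ¬ S q)
    (exists_move_mem : ∀ p, Legal p → ¬ S p → ∃ q, Move p q ∧ S q)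
    {p : α} (hp : Legal p) : PPos Move p ↔ S p := by
  induction hfp : f p using Nat.strong_induction_on generalizing p with
  | _ N ih =>
    subst hfp
    have ih' : ∀ q, Move p q → ∀ r, Move q r → (PPos Move r ↔ S r) := fun q hpq r hqr =>
      have hq := legal_of_move p q hp hpq
      ih _ ((lt_of_move q r hq hqr).trans (lt_of_move p q hp hpq))
        (legal_of_move q r hq hqr) rfl
    constructor
    · intro hP
      by_contra hS
      obtain ⟨q, hpq, hSq⟩ := exists_move_mem p hp hS
      obtain ⟨r, hqr, hPr⟩ := nPos_iff.mp (hP q hpq)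
      exact not_mem_of_move q r (legal_of_move p q hp hpq) hSq hqr ((ih' q hpq r hqr).mp hPr)
    · intro hS q hpq
      have hq := legal_of_move p q hp hpq
      obtain ⟨r, hqr, hSr⟩ := exists_move_mem q hq (not_mem_of_move p q hp hS hpq)
      exact nPos_iff.mpr ⟨r, hqr, (ih' q hpq r hqr).mpr hSr⟩

end Kernel

theorem Multiset.exists_le_card_eq {α : Type*} {s : Multiset α} {k : ℕ} (hk : k ≤ card s) :
    ∃ t ≤ s, card t = k := by
  obtain ⟨t, ht⟩ := card_pos_iff_exists_mem.mp
    (by rw [card_powersetCard]; exact Nat.choose_pos hk : 0 < card (powersetCard k s))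
  exact ⟨t, mem_powersetCard.mp ht⟩

theorem padicValNat_two_pow_mul_odd {k m : ℕ} (hm : Odd m) : padicValNat 2 (2 ^ k * m) = k := by
  rw [padicValNat.mul (by positivity) hm.pos.ne', padicValNat.prime_pow,
    padicValNat.eq_zero_of_not_dvd hm.not_two_dvd_nat, add_zero]

theorem padicValNat_two_lt_add {a b : ℕ} (ha : a ≠ 0) (hb : b ≠ 0)
    (h : padicValNat 2 a = padicValNat 2 b) : padicValNat 2 a < padicValNat 2 (a + b) := by
  obtain ⟨i, a', ⟨s, rfl⟩, rfl⟩ := Nat.exists_eq_two_pow_mul_odd ha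
  obtain ⟨j, b', ⟨t, rfl⟩, rfl⟩ := Nat.exists_eq_two_pow_mul_odd hb
  simp only [padicValNat_two_pow_mul_odd (odd_two_mul_add_one _)] at h ⊢
  subst h
  rw [Nat.lt_iff_add_one_le, ← padicValNat_dvd_iff_le (by positivity)]
  exact ⟨s + t + 1, by ring⟩

theorem two_pow_lt_of_lt_padicValNat {v z : ℕ} (h : v < padicValNat 2 z) : 2 ^ v < z := by
  have hz : z ≠ 0 := by rintro rfl; simp at h
  calc 2 ^ v < 2 ^ (v + 1) := Nat.pow_lt_pow_succ one_lt_two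
    _ ≤ z := Nat.le_of_dvd (Nat.pos_of_ne_zero hz) ((padicValNat_dvd_iff_le hz).mpr h)

theorem padicValNat_two_sub_two_pow {v z : ℕ} (h : v < padicValNat 2 z) :
    padicValNat 2 (z - 2 ^ v) = v := by
  have hz : z ≠ 0 := by rintro rfl; simp at h
  obtain ⟨c, rfl⟩ := (padicValNat_dvd_iff_le hz).mpr h
  obtain ⟨c, rfl⟩ := Nat.exists_eq_succ_of_ne_zero (right_ne_zero_of_mul hz)
  have hsub : 2 ^ (v + 1) * (c + 1) - 2 ^ v = 2 ^ v * (2 * c + 1) :=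
    Nat.sub_eq_of_eq_add (by ring)
  rw [hsub, padicValNat_two_pow_mul_odd (odd_two_mul_add_one _)]

open Multiset

def EqualTwoAdicVals (Z : Multiset ℕ) : Prop :=
  ∀ x ∈ Z, ∀ y ∈ Z, padicValNat 2 x = padicValNat 2 y

namespace NMTHMove

variable {n : ℕ} {p q : Multiset ℕ}

theorem card_eq (h : NMTHMove n p q) : card q = card p := by
  obtain ⟨k, d, u, L, -, -, hd, hL, -, rfl, rfl⟩ := h
  simp only [card_add, card_map, hd, hL]
  omega

theorem pos (h : NMTHMove n p q) (hp : ∀ x ∈ p, 0 < x) : ∀ x ∈ q, 0 < x := by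
  obtain ⟨k, d, u, L, -, -, -, -, hL, rfl, rfl⟩ := h
  simp only [mem_add, mem_map]
  rintro x ((hx | ⟨e, he, rfl⟩) | ⟨e, he, rfl⟩)
  · exact hp x (by simp [hx])
  · exact (hL e he).1
  · exact (hL e he).2

theorem sum_lt (h : NMTHMove n p q) (hp : ∀ x ∈ p, 0 < x) : q.sum < p.sum := by
  obtain ⟨k, d, u, L, hk, -, hd, -, -, rfl, rfl⟩ := h
  obtain ⟨x, hx⟩ := card_pos_iff_exists_mem.mp (hd ▸ hk : 0 < card d)
  have hdsum : 0 < d.sum := (hp x (by simp [hx])).trans_le (le_sum_of_mem hx)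
  simp only [sum_add, sum_map_add]
  omega

theorem not_equalTwoAdicVals (hodd : Odd n) (hcard : card p = n) (hp : EqualTwoAdicVals p)
    (h : NMTHMove n p q) : ¬ EqualTwoAdicVals q := by
  obtain ⟨k, d, u, L, hk, hkn, hd, hL, hLpos, rfl, rfl⟩ := h
  have hu : 0 < card u := by
    simp only [card_add, card_map, hd, hL] at hcard
    obtain ⟨m, rfl⟩ := hodd
    omega
  obtain ⟨x, hx⟩ := card_pos_iff_exists_mem.mp hu
  obtain ⟨e, he⟩ := card_pos_iff_exists_mem.mp (hL ▸ hk : 0 < card L)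
  intro hq
  have h₁ : padicValNat 2 e.1 = padicValNat 2 x :=
    hq _ (by simp [mem_map_of_mem _ he]) _ (by simp [hx])
  have h₂ : padicValNat 2 e.2 = padicValNat 2 x :=
    hq _ (by simp [mem_map_of_mem _ he]) _ (by simp [hx])
  have h₃ : padicValNat 2 (e.1 + e.2) = padicValNat 2 x :=
    hp _ (by simp [mem_map_of_mem (fun e : ℕ × ℕ => e.1 + e.2) he]) _ (by simp [hx])
  have := padicValNat_two_lt_add (hLpos e he).1.ne' (hLpos e he).2.ne' (h₁.trans h₂.symm)
  omega

end NMTHMove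

theorem exists_nmthMove_of_eq_add {n v : ℕ} {D U S : Multiset ℕ} (hS : 1 ≤ card S)
    (hDS : card D = card S) (hSn : 2 * card S ≤ n) (hU : ∀ x ∈ U, padicValNat 2 x = v)
    (hSv : ∀ z ∈ S, v < padicValNat 2 z) :
    ∃ Q, NMTHMove n (D + U + S) Q ∧ ∀ x ∈ Q, padicValNat 2 x = v := by
  set L := S.map fun z => (2 ^ v, z - 2 ^ v)
  have hLS : L.map (fun e => e.1 + e.2) = S := by
    rw [map_map]
    conv_rhs => rw [← map_id S]
    refine map_congr rfl fun z hz => ?_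
    have := two_pow_lt_of_lt_padicValNat (hSv z hz)
    simp only [Function.comp_apply, id]
    omega
  refine ⟨U + L.map Prod.fst + L.map Prod.snd,
    ⟨card S, D, U, L, hS, hSn, hDS, card_map _ _, ?_, by rw [hLS], rfl⟩, ?_⟩
  · simp only [L, mem_map]
    rintro _ ⟨z, hz, rfl⟩
    exact ⟨by positivity, Nat.sub_pos_of_lt (two_pow_lt_of_lt_padicValNat (hSv z hz))⟩
  · simp only [L, map_map, Function.comp_def, mem_add, mem_map]
    rintro x ((hx | ⟨z, -, rfl⟩) | ⟨z, hz, rfl⟩)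
    · exact hU x hx
    · exact padicValNat.prime_pow v
    · exact padicValNat_two_sub_two_pow (hSv z hz)

theorem exists_nmthMove_equalTwoAdicVals {n : ℕ} {Z : Multiset ℕ} (hcard : card Z = n)
    (hne : ¬ EqualTwoAdicVals Z) : ∃ Q, NMTHMove n Z Q ∧ EqualTwoAdicVals Q := by
  classical
  have hZ : Z ≠ 0 := by rintro rfl; exact hne (by simp [EqualTwoAdicVals])
  obtain ⟨x₀, hx₀, hmin⟩ := exists_min_image (padicValNat 2) hZ
  set v := padicValNat 2 x₀
  set low := Z.filter (padicValNat 2 · = v)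
  set high := Z.filter (padicValNat 2 · ≠ v)
  have hZ_eq : low + high = Z := filter_add_not _ Z
  have hlow : ∀ x ∈ low, padicValNat 2 x = v := fun x hx => (mem_filter.mp hx).2
  have hhigh : ∀ x ∈ high, v < padicValNat 2 x := fun x hx =>
    (hmin x (mem_filter.mp hx).1).lt_of_ne' (mem_filter.mp hx).2
  have hlow_pos : 0 < card low :=
    card_pos_iff_exists_mem.mpr ⟨x₀, mem_filter.mpr ⟨hx₀, rfl⟩⟩
  have hhigh_pos : 0 < card high := by
    refine card_pos.mpr fun h0 => hne fun x hx y hy => ?_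
    rw [← hZ_eq, h0, add_zero] at hx hy
    rw [hlow x hx, hlow y hy]
  have hn : card low + card high = n := by rw [← hcard, ← hZ_eq, card_add]
  set k := (card high + 1) / 2
  obtain ⟨S, hS, hSk⟩ := exists_le_card_eq (s := high) (k := k) (by omega)
  obtain ⟨T, hT, hTk⟩ := exists_le_card_eq (s := low) (k := 2 * k - card high) (by omega)
  have hZ_split : Z = (high - S + T) + (low - T) + S := calc
    Z = (low - T + T) + (high - S + S) := by
      rw [tsub_add_cancel_of_le hT, tsub_add_cancel_of_le hS, hZ_eq]
    _ = (high - S + T) + (low - T) + S := by ac_rfl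
  obtain ⟨Q, hmove, hQ⟩ := exists_nmthMove_of_eq_add (n := n) (D := high - S + T) (U := low - T)
    (by omega) (by rw [card_add, card_sub hS]; omega) (by omega)
    (fun x hx => hlow x (mem_of_le (Multiset.sub_le_self _ _) hx))
    (fun z hz => hhigh z (mem_of_le hS hz))
  exact ⟨Q, hZ_split ▸ hmove, fun x hx y hy => (hQ x hx).trans (hQ y hy).symm⟩

theorem stmt12_general (n : ℕ) (hodd : Odd n) (Z : Multiset ℕ)
    (hcard : Multiset.card Z = n) (hpos : ∀ x ∈ Z, 0 < x) :
    PPos (NMTHMove n) Z ↔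
      ∀ x ∈ Z, ∀ y ∈ Z, padicValNat 2 x = padicValNat 2 y :=
  pPos_iff_of_kernel (fun p => card p = n ∧ ∀ x ∈ p, 0 < x) EqualTwoAdicVals Multiset.sum
    (fun _ _ hp h => ⟨h.card_eq.trans hp.1, h.pos hp.2⟩)
    (fun _ _ hp h => h.sum_lt hp.2)
    (fun _ _ hp hS h => h.not_equalTwoAdicVals hodd hp.1 hS)
    (fun _ hp hS => exists_nmthMove_equalTwoAdicVals hp.1 hS)
    ⟨hcard, hpos⟩

theorem stmt12 (n : ℕ) (hn : 3 ≤ n) (hodd : Odd n) (Z : Multiset ℕ)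
    (hcard : Multiset.card Z = n) (hpos : ∀ x ∈ Z, 0 < x) :
    PPos (NMTHMove n) Z ↔
      ∀ x ∈ Z, ∀ y ∈ Z, padicValNat 2 x = padicValNat 2 y :=
  stmt12_general n hodd Z hcard hpos
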